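/- u_j(k) is an eigenvector of Û₁(k)Û₂(k) with eigenvalue λ_j(k): explicitly, Û₁(k)Û₂(k)·v = λ_j(k)·v where v = [ c₁s₂ e^{ik} - s₁c₂, i(-c₁c₂ sin k - (-1)^j √(1-A²)) ]ᵀ, λ_j(k) = A - i(-1)^j√(1-A²), A = c₁c₂ cos k + s₁s₂. -/

import Mathlib

noncomputable def Ucoin (θ : ℝ) : Matrix (Fin 2) (Fin 2) ℂ :=
  !![(Real.cos θ : ℂ), (Real.sin θ : ℂ); (Real.sin θ : ℂ), -(Real.cos θ : ℂ)]

noncomputable def Dmat (k : ℝ) : Matrix (Fin 2) (Fin 2) ℂ :=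
  !![Complex.exp ((k : ℂ) / 2 * Complex.I), 0; 0, Complex.exp (-((k : ℂ) / 2) * Complex.I)]

noncomputable def hatU (θ k : ℝ) : Matrix (Fin 2) (Fin 2) ℂ := Dmat k * Ucoin θ

/-- `A(k) = c₁c₂ cos k + s₁s₂`. -/
noncomputable def Aval (θ₁ θ₂ k : ℝ) : ℝ :=
  Real.cos θ₁ * Real.cos θ₂ * Real.cos k + Real.sin θ₁ * Real.sin θ₂

/-- `λ_j(k) = A - i(-1)^j √(1-A²)`. -/
noncomputable def lam (θ₁ θ₂ k : ℝ) (j : ℕ) : ℂ :=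
  (Aval θ₁ θ₂ k : ℂ) - Complex.I * (-1 : ℂ) ^ j * (Real.sqrt (1 - (Aval θ₁ θ₂ k) ^ 2) : ℂ)

/-- The (unnormalized) eigenvector `v`. -/
noncomputable def evec (θ₁ θ₂ k : ℝ) (j : ℕ) : Fin 2 → ℂ :=
  ![(Real.cos θ₁ * Real.sin θ₂ : ℝ) * Complex.exp ((k : ℂ) * Complex.I)
      - ((Real.sin θ₁ * Real.cos θ₂ : ℝ) : ℂ),
    Complex.I * ((-(Real.cos θ₁ * Real.cos θ₂ * Real.sin k)
      - (-1 : ℝ) ^ j * Real.sqrt (1 - (Aval θ₁ θ₂ k) ^ 2) : ℝ) : ℂ)]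

/- `Û₁Û₂` has determinant `(-1)² = 1` and trace `2A`, so `λ_j` is a root of its characteristic
polynomial `μ² - 2Aμ + 1`. For a root `μ` of the characteristic polynomial of any `2 × 2` matrix `M`,
`(M₀₁, μ - M₀₀)` lies in the kernel of `M - μ`, and for `μ = λ_j` this vector is `v`. -/

open Complex Matrix

theorem Matrix.mulVec_eigenvector_fin_two {R : Type*} [CommRing R]
    (M : Matrix (Fin 2) (Fin 2) R) {μ : R} (hμ : μ ^ 2 - M.trace * μ + M.det = 0) :
    M *ᵥ ![M 0 1, μ - M 0 0] = μ • ![M 0 1, μ - M 0 0] := by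
  rw [trace_fin_two, det_fin_two] at hμ
  ext i
  fin_cases i <;>
    simp only [mulVec, dotProduct, Fin.sum_univ_two, Fin.zero_eta, Fin.mk_one, Fin.isValue,
      cons_val_zero, cons_val_one, cons_val_fin_one, Pi.smul_apply, smul_eq_mul]
  · ring
  · linear_combination -hμ

theorem det_Dmat (k : ℝ) : (Dmat k).det = 1 := by
  rw [Dmat, det_fin_two_of, ← exp_add]
  simp

theorem det_Ucoin (θ : ℝ) : (Ucoin θ).det = -1 := by
  rw [Ucoin, det_fin_two_of, ofReal_cos, ofReal_sin]
  linear_combination -sin_sq_add_cos_sq (θ : ℂ)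

theorem det_hatU_mul_hatU (θ₁ θ₂ k : ℝ) : (hatU θ₁ k * hatU θ₂ k).det = 1 := by
  simp only [hatU, det_mul, det_Dmat, det_Ucoin]
  norm_num

theorem hatU_mul_hatU (θ₁ θ₂ k : ℝ) :
    hatU θ₁ k * hatU θ₂ k =
      !![Real.cos θ₁ * Real.cos θ₂ * exp (k * I) + Real.sin θ₁ * Real.sin θ₂,
          Real.cos θ₁ * Real.sin θ₂ * exp (k * I) - Real.sin θ₁ * Real.cos θ₂;
        Real.sin θ₁ * Real.cos θ₂ - Real.cos θ₁ * Real.sin θ₂ * exp (-k * I),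
          Real.sin θ₁ * Real.sin θ₂ + Real.cos θ₁ * Real.cos θ₂ * exp (-k * I)] := by
  have hsq : exp (k * I) = exp (k / 2 * I) * exp (k / 2 * I) := by
    rw [← exp_add]; ring_nf
  have hsq' : exp (-k * I) = exp (-(k / 2) * I) * exp (-(k / 2) * I) := by
    rw [← exp_add]; ring_nf
  have hinv : exp (k / 2 * I) * exp (-(k / 2) * I) = 1 := by
    rw [← exp_add]; simp
  simp only [hatU, Dmat, Ucoin, mul_fin_two, hsq, hsq']
  ext i j
  fin_cases i <;> fin_cases j <;> dsimp
  · linear_combination Real.sin θ₁ * Real.sin θ₂ * hinv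
  · linear_combination -(Real.sin θ₁ * Real.cos θ₂) * hinv
  · linear_combination Real.sin θ₁ * Real.cos θ₂ * hinv
  · linear_combination Real.sin θ₁ * Real.sin θ₂ * hinv

theorem trace_hatU_mul_hatU (θ₁ θ₂ k : ℝ) :
    (hatU θ₁ k * hatU θ₂ k).trace = 2 * Aval θ₁ θ₂ k := by
  rw [hatU_mul_hatU, trace_fin_two_of, Aval]
  push_cast
  linear_combination -(cos (θ₁ : ℂ) * cos (θ₂ : ℂ)) * two_cos (k : ℂ)

theorem lam_sq_sub_two_mul_Aval_mul_lam_add_one (θ₁ θ₂ k : ℝ) (h : Aval θ₁ θ₂ k ^ 2 ≤ 1)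
    (j : ℕ) : lam θ₁ θ₂ k j ^ 2 - 2 * Aval θ₁ θ₂ k * lam θ₁ θ₂ k j + 1 = 0 := by
  set s := Real.sqrt (1 - Aval θ₁ θ₂ k ^ 2)
  have hs : (s : ℂ) ^ 2 = 1 - (Aval θ₁ θ₂ k : ℂ) ^ 2 := by
    exact_mod_cast Real.sq_sqrt (by linarith)
  have hsign : ((-1 : ℂ) ^ j) ^ 2 = 1 := by
    rw [← pow_mul, mul_comm, pow_mul, neg_one_sq, one_pow]
  rw [lam]
  linear_combination ((-1 : ℂ) ^ j) ^ 2 * (s : ℂ) ^ 2 * I_sq - (s : ℂ) ^ 2 * hsign - hs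

theorem evec_eq_vec_hatU_mul_hatU (θ₁ θ₂ k : ℝ) (j : ℕ) :
    evec θ₁ θ₂ k j =
      ![(hatU θ₁ k * hatU θ₂ k) 0 1, lam θ₁ θ₂ k j - (hatU θ₁ k * hatU θ₂ k) 0 0] := by
  rw [hatU_mul_hatU, evec, lam, Aval, exp_mul_I]
  ext i
  fin_cases i
  · simp
  · simp only [of_apply, cons_val_one, cons_val_zero, cons_val_fin_one]
    push_cast
    ring

theorem stmt_11_general (θ₁ θ₂ k : ℝ) (h : (Aval θ₁ θ₂ k) ^ 2 ≤ 1)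
    (j : ℕ) :
    (hatU θ₁ k * hatU θ₂ k).mulVec (evec θ₁ θ₂ k j) = lam θ₁ θ₂ k j • evec θ₁ θ₂ k j := by
  rw [evec_eq_vec_hatU_mul_hatU]
  apply mulVec_eigenvector_fin_two
  rw [trace_hatU_mul_hatU, det_hatU_mul_hatU]
  exact lam_sq_sub_two_mul_Aval_mul_lam_add_one θ₁ θ₂ k h j

theorem stmt_11 (θ₁ θ₂ k : ℝ) (h : (Aval θ₁ θ₂ k) ^ 2 ≤ 1)
    (j : ℕ) (hj : j = 1 ∨ j = 2) :
    (hatU θ₁ k * hatU θ₂ k).mulVec (evec θ₁ θ₂ k j) = lam θ₁ θ₂ k j • evec θ₁ θ₂ k j :=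
  stmt_11_general θ₁ θ₂ k h j
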